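/- Let ψ: P^{n-1} ⇢ P^{n-1} be a Cremona transformation given by an n-tuple (f₀, …, f_{n-1}) of homogeneous polynomials of degree h in the variables x₀, …, x_{n-1}. Then the linear system {f₀, …, f_{n-1}, x_n·x₀^{h-1}} defines a birational map Ψ: Pⁿ ⇢ Pⁿ whose restriction to the hyperplane (x_n = 0) is ψ, and which sends the lines through the point p = [0, …, 0, 1] to lines through a fixed point. -/

import Mathlib

/-!
Concrete framework: projective space over a field `k` as `Projectivization`,
hypersurfaces as zero loci of homogeneous polynomials, rational maps given by
tuples of homogeneous polynomials, birational maps between (closed) subvarieties,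
and Cremona equivalence of divisors.
-/

open MvPolynomial

/-- Projective `n`-space over `k`, as the projectivization of `k^{n+1}`. -/
abbrev ProjSp (k : Type) [Field k] (n : ℕ) : Type :=
  Projectivization k (Fin (n + 1) → k)

namespace ProjSp

variable (k : Type) [Field k]

/-- The zero locus in `ℙⁿ` of a (homogeneous) polynomial. -/
def zeros {n : ℕ} (f : MvPolynomial (Fin (n + 1)) k) : Set (ProjSp k n) :=
  {x | eval x.rep f = 0}

/-- `D ⊆ ℙⁿ` is an irreducible and reduced divisor (hypersurface): it is the zero
locus of an irreducible homogeneous polynomial of positive degree. -/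
def IsIrredDivisor {n : ℕ} (D : Set (ProjSp k n)) : Prop :=
  ∃ (d : ℕ) (f : MvPolynomial (Fin (n + 1)) k),
    0 < d ∧ f.IsHomogeneous d ∧ Irreducible f ∧ D = zeros k f

/-- A hyperplane in `ℙⁿ`: the zero locus of a nonzero linear form. -/
def IsHyperplane {n : ℕ} (H : Set (ProjSp k n)) : Prop :=
  ∃ f : MvPolynomial (Fin (n + 1)) k, f ≠ 0 ∧ f.IsHomogeneous 1 ∧ H = zeros k f

/-- The line through two points of `ℙⁿ` (the set of points whose representing line
lies in the plane spanned by the two points). -/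
def lineThrough {n : ℕ} (p q : ProjSp k n) : Set (ProjSp k n) :=
  {z | z.submodule ≤ p.submodule ⊔ q.submodule}

/-- `S` is a cone with vertex `p`: `p ∈ S` and `S` is a union of lines through `p`.
For an irreducible divisor of degree `d` this is equivalent to `p` being a point of
multiplicity `d` on `S`. -/
def IsConeWithVertex {n : ℕ} (S : Set (ProjSp k n)) (p : ProjSp k n) : Prop :=
  p ∈ S ∧ ∀ x ∈ S, lineThrough k p x ⊆ S

/-- The cone with vertex `p` over a set `A ⊆ ℙⁿ`: the union of the lines joining `p`
to the points of `A`. -/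
def coneOver {n : ℕ} (p : ProjSp k n) (A : Set (ProjSp k n)) : Set (ProjSp k n) :=
  ⋃ a ∈ A, lineThrough k p a

/-- The data of a rational map `ℙⁿ ⇢ ℙᵐ`: an `(m+1)`-tuple of homogeneous polynomials
of a common degree in `n+1` variables. -/
structure RatMap (n m : ℕ) where
  deg : ℕ
  comp : Fin (m + 1) → MvPolynomial (Fin (n + 1)) k
  homog : ∀ i, (comp i).IsHomogeneous deg

variable {k}

/-- The rational map is defined at `x` if not all of its components vanish at `x`. -/
def RatMap.Defined {n m : ℕ} (F : RatMap k n m) (x : ProjSp k n) : Prop :=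
  (fun i => eval x.rep (F.comp i)) ≠ 0

open scoped Classical in
/-- The value of a rational map at a point (junk value where undefined). -/
noncomputable def RatMap.app {n m : ℕ} (F : RatMap k n m) (x : ProjSp k n) :
    ProjSp k m :=
  if h : (fun i => eval x.rep (F.comp i)) ≠ 0 then Projectivization.mk k _ h
  else Classical.arbitrary _

variable (k)

/-- `F` (with inverse `G`) restricts to a birational map from `A ⊆ ℙⁿ` onto `B ⊆ ℙᵐ`:
there are hypersurface complements, each meeting `A` resp. `B`, on which `F` and `G`
are defined, map `A` into `B` (resp. `B` into `A`) and are mutually inverse.  For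
irreducible closed `A`, `B` this says exactly that `F` induces a birational map
`A ⇢ B`, i.e. that the strict transform (proper image) of `A` under `F` is `B`. -/
def IsBirationalOn {n m : ℕ} (F : RatMap k n m) (G : RatMap k m n)
    (A : Set (ProjSp k n)) (B : Set (ProjSp k m)) : Prop :=
  ∃ (u : MvPolynomial (Fin (n + 1)) k) (v : MvPolynomial (Fin (m + 1)) k)
    (du dv : ℕ), u.IsHomogeneous du ∧ v.IsHomogeneous dv ∧
    ¬ A ⊆ zeros k u ∧ ¬ B ⊆ zeros k v ∧
    (∀ x ∈ A \ zeros k u,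
      F.Defined x ∧ F.app x ∈ B ∧ G.Defined (F.app x) ∧ G.app (F.app x) = x) ∧
    (∀ y ∈ B \ zeros k v,
      G.Defined y ∧ G.app y ∈ A ∧ F.Defined (G.app y) ∧ F.app (G.app y) = y)

/-- `A ⊆ ℙⁿ` and `B ⊆ ℙᵐ` are birational (as abstract varieties). -/
def Birational {n m : ℕ} (A : Set (ProjSp k n)) (B : Set (ProjSp k m)) : Prop :=
  ∃ (F : RatMap k n m) (G : RatMap k m n), IsBirationalOn k F G A B

/-- Two divisors `D, D' ⊆ ℙⁿ` are Cremona equivalent: there is a birational self-map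
`Φ` of `ℙⁿ` (a Cremona transformation) whose strict transform of `D` is `D'`,
i.e. `Φ` restricts to a birational map from `D` onto `D'`. -/
def CremonaEquivalent {n : ℕ} (D D' : Set (ProjSp k n)) : Prop :=
  ∃ (F : RatMap k n n) (G : RatMap k n n),
    IsBirationalOn k F G Set.univ Set.univ ∧ IsBirationalOn k F G D D'

/-- `C` is a rational variety: it is birational to some projective space. -/
def IsRationalVariety {n : ℕ} (C : Set (ProjSp k n)) : Prop :=
  ∃ m : ℕ, Birational k C (Set.univ : Set (ProjSp k m))

end ProjSp

open ProjSp

/-- The linear embedding `k^{m+1} → k^{m+2}` appending a last coordinate `0`. -/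
def extendZeroLinear (k : Type) [Field k] (m : ℕ) :
    (Fin (m + 1) → k) →ₗ[k] (Fin (m + 2) → k) where
  toFun v := Fin.snoc v 0
  map_add' u v := by
    funext i
    refine Fin.lastCases ?_ (fun j => ?_) i <;> simp
  map_smul' c v := by
    funext i
    refine Fin.lastCases ?_ (fun j => ?_) i <;> simp

lemma extendZeroLinear_injective (k : Type) [Field k] (m : ℕ) :
    Function.Injective (extendZeroLinear k m) := by
  intro u v h
  funext j
  have := congrFun h j.castSucc
  simpa [extendZeroLinear] using this

/-- The embedding of `ℙᵐ` into `ℙ^{m+1}` as the hyperplane `(x_{m+1} = 0)`. -/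
noncomputable def hyperplaneEmbedding (k : Type) [Field k] (m : ℕ) :
    ProjSp k m → ProjSp k (m + 1) :=
  Projectivization.map (extendZeroLinear k m) (extendZeroLinear_injective k m)

/-- Given the data `(f₀, …, f_m)` of a Cremona transformation of `ℙᵐ` of degree `h`,
the rational map `Ψ : ℙ^{m+1} ⇢ ℙ^{m+1}` given by the linear system
`{f₀, …, f_m, x_{m+1}·x₀^{h-1}}`. -/
noncomputable def coneExtension {k : Type} [Field k] {m : ℕ}
    (F : RatMap k m m) (h1 : 1 ≤ F.deg) : RatMap k (m + 1) (m + 1) where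
  deg := F.deg
  comp := Fin.lastCases
    (MvPolynomial.X (Fin.last (m + 1)) * MvPolynomial.X (0 : Fin (m + 2)) ^ (F.deg - 1))
    (fun j => MvPolynomial.rename (Fin.castSucc) (F.comp j))
  homog := by
    intro i
    refine Fin.lastCases ?_ (fun j => ?_) i
    · try dsimp only
      rw [Fin.lastCases_last]
      have h2 : 1 + 1 * (F.deg - 1) = F.deg := by omega
      have := (MvPolynomial.isHomogeneous_X k (Fin.last (m + 1))).mul
        ((MvPolynomial.isHomogeneous_X k (0 : Fin (m + 2))).pow (F.deg - 1))
      rwa [h2] at this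
    · try dsimp only
      rw [Fin.lastCases_castSucc]
      exact (F.homog j).rename_isHomogeneous

/-- The point `p = [0, …, 0, 1] ∈ ℙ^{m+1}`. -/
noncomputable def lastCoordPoint (k : Type) [Field k] (m : ℕ) : ProjSp k (m + 1) :=
  Projectivization.mk k (Pi.single (Fin.last (m + 1)) 1)
    (by simp [Pi.single_eq_same, Function.ne_iff]; try exact ⟨Fin.last (m + 1), by simp⟩)

/-!
In affine coordinates `Ψ(v, t) = (ψ(v), t·v₀^{h-1})`. If `g` inverts `ψ`, say `g(ψ(v)) = a·v`,
then `(w, s) ↦ (w₀·g₀(w)^{h-1}·g(w), s·f₀(g(w)))` inverts `Ψ`: both blocks of coordinates of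
`Ψ⁻¹(Ψ(v, t))` acquire the same factor `f₀(v)·a^h·v₀^{h-1}`. This holds off the hypersurface
`x₀·u·f₀ = 0`, which is proper because `f₀ ≠ 0`: the image of a birational map is not contained in
a coordinate hyperplane. A point `[β·v : s]` of the line through `p` and `[v : t]` is sent to
`β^h·[ψ(v) : 0] + (…)·p`, a point of the line through `p` and `[ψ(v) : 0]`.
-/

theorem Fin.snoc_ne_zero {k : Type*} [Zero k] {n : ℕ} {v : Fin (n + 1) → k} (hv : v ≠ 0) (t : k) :
    (Fin.snoc v t : Fin (n + 2) → k) ≠ 0 :=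
  fun h => hv (funext fun j => by simpa using congrFun h j.castSucc)

namespace MvPolynomial

theorem IsHomogeneous.eval_smul {σ R : Type*} [CommSemiring R] {f : MvPolynomial σ R} {d : ℕ}
    (hf : f.IsHomogeneous d) (c : R) (v : σ → R) : eval (c • v) f = c ^ d * eval v f := by
  rw [eval_eq, eval_eq, Finset.mul_sum]
  refine Finset.sum_congr rfl fun x hx => ?_
  have hdeg : ∑ i ∈ x.support, x i = d := by
    rw [← hf (mem_support_iff.mp hx), Finsupp.weight_apply]
    simp [Finsupp.sum]
  simp only [Pi.smul_apply, smul_eq_mul, mul_pow, Finset.prod_mul_distrib,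
    Finset.prod_pow_eq_pow_sum, hdeg]
  ring

theorem exists_eval_ne_zero_of_ne_zero {σ R : Type*} [CommRing R] [IsDomain R] [Infinite R]
    {f : MvPolynomial σ R} (hf : f ≠ 0) (i : σ) : ∃ v : σ → R, v i ≠ 0 ∧ eval v f ≠ 0 := by
  by_contra! h
  refine mul_ne_zero hf (X_ne_zero i) (MvPolynomial.funext fun v => ?_)
  by_cases hv : v i = 0 <;> simp [hv, h v]

theorem eval_aeval {σ τ R : Type*} [CommSemiring R] (w : τ → R) (g : σ → MvPolynomial τ R)
    (p : MvPolynomial σ R) : eval w (aeval g p) = eval (fun i => eval w (g i)) p := by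
  rw [aeval_eq_bind₁]
  simp only [eval, eval₂Hom_bind₁]

end MvPolynomial

open MvPolynomial Projectivization

namespace ProjSp

variable {k : Type} [Field k]

theorem mk_mem_zeros_iff {n d : ℕ} {f : MvPolynomial (Fin (n + 1)) k} (hf : f.IsHomogeneous d)
    {v : Fin (n + 1) → k} (hv : v ≠ 0) : mk k v hv ∈ zeros k f ↔ eval v f = 0 := by
  obtain ⟨c, hc⟩ := exists_smul_eq_mk_rep k v hv
  simp [zeros, ← hc, Units.smul_def, hf.eval_smul]

theorem not_univ_subset_zeros [Infinite k] {n d : ℕ} {f : MvPolynomial (Fin (n + 1)) k}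
    (hf : f.IsHomogeneous d) (h0 : f ≠ 0) : ¬ Set.univ ⊆ zeros k f := by
  obtain ⟨v, hv0, hv⟩ := exists_eval_ne_zero_of_ne_zero h0 0
  have hv' : v ≠ 0 := fun h => hv0 (by simp [h])
  exact fun hsub => hv ((mk_mem_zeros_iff hf hv').mp (hsub trivial))

theorem ne_zero_of_not_subset_zeros {n : ℕ} {A : Set (ProjSp k n)}
    {f : MvPolynomial (Fin (n + 1)) k} (h : ¬ A ⊆ zeros k f) : f ≠ 0 := by
  rintro rfl
  exact h fun x _ => by simp [zeros]

namespace RatMap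

variable {n m : ℕ}

noncomputable def evalVec (F : RatMap k n m) (v : Fin (n + 1) → k) : Fin (m + 1) → k :=
  fun i => eval v (F.comp i)

theorem evalVec_smul (F : RatMap k n m) (c : k) (v : Fin (n + 1) → k) :
    F.evalVec (c • v) = c ^ F.deg • F.evalVec v := by
  funext i
  simp [evalVec, (F.homog i).eval_smul]

theorem defined_iff (F : RatMap k n m) (x : ProjSp k n) : F.Defined x ↔ F.evalVec x.rep ≠ 0 :=
  Iff.rfl

theorem defined_mk_iff (F : RatMap k n m) {v : Fin (n + 1) → k} (hv : v ≠ 0) :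
    F.Defined (Projectivization.mk k v hv) ↔ F.evalVec v ≠ 0 := by
  obtain ⟨c, hc⟩ := exists_smul_eq_mk_rep k v hv
  rw [defined_iff, ← hc, Units.smul_def, evalVec_smul]
  exact smul_ne_zero_iff_right (pow_ne_zero _ c.ne_zero)

theorem app_of_defined (F : RatMap k n m) {x : ProjSp k n} (hx : F.Defined x) :
    F.app x = Projectivization.mk k (F.evalVec x.rep) ((F.defined_iff x).mp hx) :=
  dif_pos hx

theorem app_mk (F : RatMap k n m) {v : Fin (n + 1) → k} (hv : v ≠ 0) (hF : F.evalVec v ≠ 0) :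
    F.app (Projectivization.mk k v hv) = Projectivization.mk k (F.evalVec v) hF := by
  obtain ⟨c, hc⟩ := exists_smul_eq_mk_rep k v hv
  rw [app_of_defined F ((defined_mk_iff F hv).mpr hF), mk_eq_mk_iff]
  refine ⟨c ^ F.deg, ?_⟩
  rw [← hc, Units.smul_def, Units.smul_def, evalVec_smul, Units.val_pow_eq_pow_val]

def InverseOff (F : RatMap k n m) (G : RatMap k m n) (u : MvPolynomial (Fin (n + 1)) k) :
    Prop :=
  ∀ x ∉ zeros k u, F.Defined x ∧ G.Defined (F.app x) ∧ G.app (F.app x) = x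

theorem isBirationalOn_univ_iff [Infinite k] (F : RatMap k n m) (G : RatMap k m n) :
    IsBirationalOn k F G Set.univ Set.univ ↔
      ∃ (u : MvPolynomial (Fin (n + 1)) k) (v : MvPolynomial (Fin (m + 1)) k) (du dv : ℕ),
        u.IsHomogeneous du ∧ v.IsHomogeneous dv ∧ u ≠ 0 ∧ v ≠ 0 ∧
        F.InverseOff G u ∧ G.InverseOff F v := by
  constructor
  · rintro ⟨u, v, du, dv, hu, hv, hAu, hBv, hFG, hGF⟩
    refine ⟨u, v, du, dv, hu, hv, ne_zero_of_not_subset_zeros hAu,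
      ne_zero_of_not_subset_zeros hBv, fun x hx => ?_, fun y hy => ?_⟩
    · obtain ⟨h₁, -, h₂, h₃⟩ := hFG x ⟨trivial, hx⟩
      exact ⟨h₁, h₂, h₃⟩
    · obtain ⟨h₁, -, h₂, h₃⟩ := hGF y ⟨trivial, hy⟩
      exact ⟨h₁, h₂, h₃⟩
  · rintro ⟨u, v, du, dv, hu, hv, hu0, hv0, hFG, hGF⟩
    refine ⟨u, v, du, dv, hu, hv, not_univ_subset_zeros hu hu0, not_univ_subset_zeros hv hv0,
      fun x hx => ?_, fun y hy => ?_⟩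
    · obtain ⟨h₁, h₂, h₃⟩ := hFG x hx.2
      exact ⟨h₁, trivial, h₂, h₃⟩
    · obtain ⟨h₁, h₂, h₃⟩ := hGF y hy.2
      exact ⟨h₁, trivial, h₂, h₃⟩

theorem InverseOff.exists_evalVec_evalVec_eq_smul {F : RatMap k n m} {G : RatMap k m n}
    {u : MvPolynomial (Fin (n + 1)) k} {du : ℕ} (h : F.InverseOff G u) (hu : u.IsHomogeneous du)
    {w : Fin (n + 1) → k} (hw : w ≠ 0) (huw : eval w u ≠ 0) :
    F.evalVec w ≠ 0 ∧ ∃ a : kˣ, G.evalVec (F.evalVec w) = a • w := by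
  obtain ⟨hF, hG, hGF⟩ := h (Projectivization.mk k w hw) (mt (mk_mem_zeros_iff hu hw).mp huw)
  rw [defined_mk_iff] at hF
  rw [app_mk F hw hF, defined_mk_iff] at hG
  rw [app_mk F hw hF, app_mk G hF hG, mk_eq_mk_iff] at hGF
  obtain ⟨a, ha⟩ := hGF
  exact ⟨hF, a, ha.symm⟩

theorem app_app_mk_of_evalVec_evalVec_eq_smul {F : RatMap k n m} {G : RatMap k m n}
    {w : Fin (n + 1) → k} (hw : w ≠ 0) (hF : F.evalVec w ≠ 0) {c : k} (hc : c ≠ 0)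
    (h : G.evalVec (F.evalVec w) = c • w) :
    F.Defined (Projectivization.mk k w hw) ∧ G.Defined (F.app (Projectivization.mk k w hw)) ∧
      G.app (F.app (Projectivization.mk k w hw)) = Projectivization.mk k w hw := by
  have hG : G.evalVec (F.evalVec w) ≠ 0 := by rw [h]; exact smul_ne_zero hc hw
  refine ⟨(defined_mk_iff F hw).mpr hF, ?_, ?_⟩
  · rw [app_mk F hw hF]; exact (defined_mk_iff G hF).mpr hG
  · rw [app_mk F hw hF, app_mk G hF hG, mk_eq_mk_iff]
    exact ⟨Units.mk0 c hc, h.symm⟩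

theorem InverseOff.comp_ne_zero [Infinite k] {F : RatMap k n m} {G : RatMap k m n}
    {v : MvPolynomial (Fin (m + 1)) k} {dv : ℕ} (h : G.InverseOff F v) (hv : v.IsHomogeneous dv)
    (hv0 : v ≠ 0) (i : Fin (m + 1)) : F.comp i ≠ 0 := by
  obtain ⟨w, hwi, hvw⟩ := exists_eval_ne_zero_of_ne_zero hv0 i
  have hw : w ≠ 0 := fun h => hwi (by simp [h])
  obtain ⟨-, b, hb⟩ := h.exists_evalVec_evalVec_eq_smul hv hw hvw
  intro hFi
  have hi := congrFun hb i
  simp only [evalVec, hFi, map_zero, Pi.smul_apply, Units.smul_def, smul_eq_mul] at hi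
  exact mul_ne_zero b.ne_zero hwi hi.symm

end RatMap

end ProjSp

section ConeExtension

variable {k : Type} [Field k] {m : ℕ} (F G : RatMap k m m) (h1 : 1 ≤ F.deg)

theorem coneExtension_evalVec (v : Fin (m + 1) → k) (t : k) :
    (coneExtension F h1).evalVec (Fin.snoc v t) =
      Fin.snoc (F.evalVec v) (t * v 0 ^ (F.deg - 1)) := by
  funext i
  refine Fin.lastCases ?_ (fun j => ?_) i
  · simp [RatMap.evalVec, coneExtension, Fin.snoc_apply_zero]
  · simp [RatMap.evalVec, coneExtension, eval_rename, Fin.snoc_comp_castSucc]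

noncomputable def coneInverse : RatMap k (m + 1) (m + 1) where
  deg := F.deg * G.deg + 1
  comp := Fin.lastCases
    (X (Fin.last (m + 1)) * rename Fin.castSucc (aeval G.comp (F.comp 0)))
    (fun j => X 0 * rename Fin.castSucc (G.comp 0 ^ (F.deg - 1) * G.comp j))
  homog i := by
    obtain ⟨e, he⟩ := Nat.exists_eq_add_of_le' h1
    refine Fin.lastCases ?_ (fun j => ?_) i
    · simp only [Fin.lastCases_last]
      convert (isHomogeneous_X k _).mul
        ((F.homog 0).aeval G.comp G.homog).rename_isHomogeneous using 1
      ring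
    · simp only [Fin.lastCases_castSucc]
      convert (isHomogeneous_X k _).mul
        (((G.homog 0).pow (F.deg - 1)).mul (G.homog j)).rename_isHomogeneous using 1
      rw [he, Nat.add_sub_cancel]
      ring

theorem coneInverse_evalVec (w : Fin (m + 1) → k) (s : k) :
    (coneInverse F G h1).evalVec (Fin.snoc w s) =
      Fin.snoc ((w 0 * G.evalVec w 0 ^ (F.deg - 1)) • G.evalVec w)
        (s * eval (G.evalVec w) (F.comp 0)) := by
  funext i
  refine Fin.lastCases ?_ (fun j => ?_) i
  · simp only [RatMap.evalVec, coneInverse, Fin.lastCases_last, Fin.snoc_last, map_mul, eval_X,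
      eval_rename, Fin.snoc_comp_castSucc, eval_aeval]
    rfl
  · simp only [RatMap.evalVec, coneInverse, map_mul, map_pow, Fin.lastCases_castSucc, eval_X,
      Fin.snoc_apply_zero, eval_rename, Fin.snoc_comp_castSucc, Fin.snoc_castSucc, Pi.smul_apply,
      smul_eq_mul]
    ring

theorem coneInverse_evalVec_coneExtension_evalVec {v : Fin (m + 1) → k} {a : k}
    (ha : G.evalVec (F.evalVec v) = a • v) (t : k) :
    (coneInverse F G h1).evalVec ((coneExtension F h1).evalVec (Fin.snoc v t)) =
      (F.evalVec v 0 * a ^ F.deg * v 0 ^ (F.deg - 1)) • Fin.snoc v t := by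
  obtain ⟨e, he⟩ := Nat.exists_eq_add_of_le' h1
  rw [coneExtension_evalVec, coneInverse_evalVec, ha, (F.homog 0).eval_smul]
  funext i
  refine Fin.lastCases ?_ (fun j => ?_) i
  · simp only [RatMap.evalVec, Pi.smul_apply, smul_eq_mul, Fin.snoc_last]
    ring
  · simp only [Pi.smul_apply, smul_eq_mul, he, add_tsub_cancel_right, Fin.snoc_castSucc]
    ring

theorem coneExtension_evalVec_coneInverse_evalVec {w : Fin (m + 1) → k} {b : k}
    (hb : F.evalVec (G.evalVec w) = b • w) (t : k) :
    (coneExtension F h1).evalVec ((coneInverse F G h1).evalVec (Fin.snoc w t)) =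
      (b * w 0 ^ F.deg * G.evalVec w 0 ^ ((F.deg - 1) * F.deg)) • Fin.snoc w t := by
  obtain ⟨e, he⟩ := Nat.exists_eq_add_of_le' h1
  have hb0 : eval (G.evalVec w) (F.comp 0) = b * w 0 := congrFun hb 0
  rw [coneInverse_evalVec, coneExtension_evalVec, RatMap.evalVec_smul, hb, hb0]
  funext i
  refine Fin.lastCases ?_ (fun j => ?_) i
  · simp only [he, add_tsub_cancel_right, Pi.smul_apply, smul_eq_mul, Fin.snoc_last]
    ring
  · simp only [he, add_tsub_cancel_right, Pi.smul_apply, smul_eq_mul, Fin.snoc_castSucc]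
    ring

theorem ProjSp.RatMap.InverseOff.coneExtension_coneInverse {u : MvPolynomial (Fin (m + 1)) k}
    {du : ℕ} (h : F.InverseOff G u) (hu : u.IsHomogeneous du) :
    (coneExtension F h1).InverseOff (coneInverse F G h1)
      (X 0 * rename Fin.castSucc (u * F.comp 0)) := by
  intro x hx
  obtain ⟨v, t, hvt⟩ : ∃ v t, Fin.snoc v t = x.rep := ⟨_, _, Fin.snoc_init_self x.rep⟩
  obtain ⟨hv0, huv, hFv0⟩ : v 0 ≠ 0 ∧ eval v u ≠ 0 ∧ F.evalVec v 0 ≠ 0 := by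
    simpa [zeros, ← hvt, Fin.snoc_apply_zero, eval_rename, Fin.snoc_comp_castSucc,
      RatMap.evalVec, not_or] using hx
  have hv : v ≠ 0 := fun h => hv0 (by simp [h])
  obtain ⟨hFv, a, ha⟩ := h.exists_evalVec_evalVec_eq_smul hu hv huv
  rw [Units.smul_def] at ha
  have hΨ : (coneExtension F h1).evalVec x.rep ≠ 0 := by
    rw [← hvt, coneExtension_evalVec]
    exact Fin.snoc_ne_zero hFv _
  have hc : F.evalVec v 0 * a ^ F.deg * v 0 ^ (F.deg - 1) ≠ 0 :=
    mul_ne_zero (mul_ne_zero hFv0 (pow_ne_zero _ a.ne_zero)) (pow_ne_zero _ hv0)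
  have := RatMap.app_app_mk_of_evalVec_evalVec_eq_smul (rep_nonzero x) hΨ hc
    (by rw [← hvt]; exact coneInverse_evalVec_coneExtension_evalVec F G h1 ha t)
  rwa [mk_rep] at this

theorem ProjSp.RatMap.InverseOff.coneInverse_coneExtension {v : MvPolynomial (Fin (m + 1)) k}
    {dv : ℕ} (h : G.InverseOff F v) (hv : v.IsHomogeneous dv) :
    (coneInverse F G h1).InverseOff (coneExtension F h1)
      (X 0 * rename Fin.castSucc (v * G.comp 0)) := by
  intro y hy
  obtain ⟨w, t, hwt⟩ : ∃ w t, Fin.snoc w t = y.rep := ⟨_, _, Fin.snoc_init_self y.rep⟩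
  obtain ⟨hw0, hvw, hGw0⟩ : w 0 ≠ 0 ∧ eval w v ≠ 0 ∧ G.evalVec w 0 ≠ 0 := by
    simpa [zeros, ← hwt, Fin.snoc_apply_zero, eval_rename, Fin.snoc_comp_castSucc,
      RatMap.evalVec, not_or] using hy
  have hw : w ≠ 0 := fun h => hw0 (by simp [h])
  obtain ⟨hGw, b, hb⟩ := h.exists_evalVec_evalVec_eq_smul hv hw hvw
  rw [Units.smul_def] at hb
  have hG' : (coneInverse F G h1).evalVec y.rep ≠ 0 := by
    rw [← hwt, coneInverse_evalVec]
    exact Fin.snoc_ne_zero (smul_ne_zero (mul_ne_zero hw0 (pow_ne_zero _ hGw0)) hGw) _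
  have hc : (b : k) * w 0 ^ F.deg * G.evalVec w 0 ^ ((F.deg - 1) * F.deg) ≠ 0 :=
    mul_ne_zero (mul_ne_zero b.ne_zero (pow_ne_zero _ hw0)) (pow_ne_zero _ hGw0)
  have := RatMap.app_app_mk_of_evalVec_evalVec_eq_smul (rep_nonzero y) hG' hc
    (by rw [← hwt]; exact coneExtension_evalVec_coneInverse_evalVec F G h1 hb t)
  rwa [mk_rep] at this

theorem coneExtension_isBirationalOn_univ [Infinite k]
    (h : IsBirationalOn k F G Set.univ Set.univ) :
    IsBirationalOn k (coneExtension F h1) (coneInverse F G h1) Set.univ Set.univ := by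
  obtain ⟨u, v, du, dv, hu, hv, hu0, hv0, hFG, hGF⟩ := (RatMap.isBirationalOn_univ_iff F G).mp h
  have rename_ne_zero {p : MvPolynomial (Fin (m + 1)) k} (hp : p ≠ 0) :
      rename (Fin.castSucc : _ → Fin (m + 2)) p ≠ 0 :=
    (map_ne_zero_iff _ (rename_injective _ (Fin.castSucc_injective _))).mpr hp
  refine (RatMap.isBirationalOn_univ_iff _ _).mpr ⟨_, _, _, _,
    (isHomogeneous_X k 0).mul (hu.mul (F.homog 0)).rename_isHomogeneous,
    (isHomogeneous_X k 0).mul (hv.mul (G.homog 0)).rename_isHomogeneous,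
    mul_ne_zero (X_ne_zero 0) (rename_ne_zero (mul_ne_zero hu0 (hGF.comp_ne_zero hv hv0 0))),
    mul_ne_zero (X_ne_zero 0) (rename_ne_zero (mul_ne_zero hv0 (hFG.comp_ne_zero hu hu0 0))),
    hFG.coneExtension_coneInverse F G h1 hu, hGF.coneInverse_coneExtension F G h1 hv⟩

end ConeExtension

section Hyperplane

variable {k : Type} [Field k] {m : ℕ}

theorem hyperplaneEmbedding_mk {v : Fin (m + 1) → k} (hv : v ≠ 0) :
    hyperplaneEmbedding k m (mk k v hv) = mk k (Fin.snoc v 0) (Fin.snoc_ne_zero hv 0) :=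
  map_mk _ _ v hv

theorem hyperplaneEmbedding_ne_lastCoordPoint (x : ProjSp k m) :
    hyperplaneEmbedding k m x ≠ lastCoordPoint k m := by
  induction x using Projectivization.ind with
  | h v hv =>
    rw [hyperplaneEmbedding_mk, lastCoordPoint, Ne, mk_eq_mk_iff]
    rintro ⟨a, ha⟩
    exact hv (funext fun j => by simpa using (congrFun ha j.castSucc).symm)

theorem init_rep_ne_zero_of_ne_lastCoordPoint {x : ProjSp k (m + 1)}
    (hx : x ≠ lastCoordPoint k m) : Fin.init x.rep ≠ 0 := by
  intro h
  apply hx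
  have hrep : x.rep = x.rep (Fin.last _) • Pi.single (Fin.last (m + 1)) 1 := by
    conv_lhs => rw [← Fin.snoc_init_self x.rep, h]
    funext i
    refine Fin.lastCases ?_ (fun j => ?_) i <;> simp
  have ht : x.rep (Fin.last _) ≠ 0 := fun ht => rep_nonzero x (by rw [hrep, ht, zero_smul])
  rw [← mk_rep x, lastCoordPoint, mk_eq_mk_iff]
  exact ⟨Units.mk0 _ ht, hrep.symm⟩

variable (F : RatMap k m m) (h1 : 1 ≤ F.deg)

theorem coneExtension_app_hyperplaneEmbedding {x : ProjSp k m} (hx : F.Defined x) :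
    (coneExtension F h1).Defined (hyperplaneEmbedding k m x) ∧
      (coneExtension F h1).app (hyperplaneEmbedding k m x) =
        hyperplaneEmbedding k m (F.app x) := by
  induction x using Projectivization.ind with
  | h v hv =>
    rw [RatMap.defined_mk_iff] at hx
    have hΨ : (coneExtension F h1).evalVec (Fin.snoc v 0) = Fin.snoc (F.evalVec v) 0 := by
      rw [coneExtension_evalVec, zero_mul]
    have hΨ0 : (coneExtension F h1).evalVec (Fin.snoc v 0) ≠ 0 := hΨ ▸ Fin.snoc_ne_zero hx 0
    rw [hyperplaneEmbedding_mk, RatMap.defined_mk_iff, RatMap.app_mk _ _ hΨ0, F.app_mk hv hx,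
      hyperplaneEmbedding_mk, mk_eq_mk_iff]
    exact ⟨hΨ0, 1, by rw [one_smul, hΨ]⟩

theorem snoc_evalVec_mem_submodule_hyperplaneEmbedding_app {v : Fin (m + 1) → k} (hv : v ≠ 0) :
    Fin.snoc (F.evalVec v) 0 ∈ (hyperplaneEmbedding k m (F.app (mk k v hv))).submodule := by
  by_cases hF : F.evalVec v = 0
  · rw [hF, show Fin.snoc (0 : Fin (m + 1) → k) 0 = extendZeroLinear k m 0 from rfl, map_zero]
    exact zero_mem _
  · rw [F.app_mk hv hF, hyperplaneEmbedding_mk, submodule_mk]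
    exact Submodule.mem_span_singleton_self _

theorem exists_rep_eq_snoc_smul_of_mem_lineThrough {x z : ProjSp k (m + 1)}
    {v : Fin (m + 1) → k} {t : k} (hx : x.rep = Fin.snoc v t)
    (hz : z ∈ lineThrough k (lastCoordPoint k m) x) : ∃ β s : k, z.rep = Fin.snoc (β • v) s := by
  have hz' : z.rep ∈ (lastCoordPoint k m).submodule ⊔ x.submodule :=
    hz (by rw [submodule_eq]; exact Submodule.mem_span_singleton_self _)
  rw [lastCoordPoint, submodule_mk, submodule_eq, hx, Submodule.mem_sup] at hz'
  obtain ⟨_, hα, _, hβ, hsum⟩ := hz'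
  obtain ⟨α, rfl⟩ := Submodule.mem_span_singleton.mp hα
  obtain ⟨β, rfl⟩ := Submodule.mem_span_singleton.mp hβ
  refine ⟨β, α + β * t, hsum.symm.trans ?_⟩
  funext i
  refine Fin.lastCases ?_ (fun j => ?_) i <;> simp

theorem coneExtension_app_mem_lineThrough {x z : ProjSp k (m + 1)} {v : Fin (m + 1) → k}
    {t : k} (hv : v ≠ 0) (hx : x.rep = Fin.snoc v t)
    (hz : z ∈ lineThrough k (lastCoordPoint k m) x) (hd : (coneExtension F h1).Defined z) :
    (coneExtension F h1).app z ∈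
      lineThrough k (lastCoordPoint k m) (hyperplaneEmbedding k m (F.app (mk k v hv))) := by
  obtain ⟨β, s, hzr⟩ := exists_rep_eq_snoc_smul_of_mem_lineThrough hx hz
  have hΨz : (coneExtension F h1).evalVec z.rep = β ^ F.deg • Fin.snoc (F.evalVec v) 0 +
      (s * (β • v) 0 ^ (F.deg - 1)) • Pi.single (Fin.last (m + 1)) 1 := by
    rw [hzr, coneExtension_evalVec, RatMap.evalVec_smul]
    funext i
    refine Fin.lastCases ?_ (fun j => ?_) i <;> simp
  show ((coneExtension F h1).app z).submodule ≤ _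
  rw [RatMap.app_of_defined _ hd, submodule_mk, Submodule.span_singleton_le_iff_mem, hΨz,
    lastCoordPoint, submodule_mk]
  exact add_mem
    (Submodule.mem_sup_right (Submodule.smul_mem _ _
      (snoc_evalVec_mem_submodule_hyperplaneEmbedding_app F hv)))
    (Submodule.mem_sup_left (Submodule.smul_mem _ _ (Submodule.mem_span_singleton_self _)))

end Hyperplane

theorem coneExtension_birational_restricts_and_maps_lines_general
    (k : Type) [Field k] [IsAlgClosed k] (m : ℕ)
    (F G : RatMap k m m) (h1 : 1 ≤ F.deg)
    (hcrem : IsBirationalOn k F G (Set.univ : Set (ProjSp k m)) Set.univ) :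
    -- `Ψ` is a birational self-map of `ℙ^{m+1}`:
    (∃ G' : RatMap k (m + 1) (m + 1),
        IsBirationalOn k (coneExtension F h1) G'
          (Set.univ : Set (ProjSp k (m + 1))) Set.univ) ∧
    -- the restriction of `Ψ` to the hyperplane `(x_{m+1} = 0)` is `ψ`:
    (∀ x : ProjSp k m, F.Defined x →
        (coneExtension F h1).Defined (hyperplaneEmbedding k m x) ∧
        (coneExtension F h1).app (hyperplaneEmbedding k m x) =
          hyperplaneEmbedding k m (F.app x)) ∧
    -- `Ψ` sends the lines through `p = [0,…,0,1]` to lines through a fixed point: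
    (∃ q : ProjSp k (m + 1), ∀ x : ProjSp k (m + 1), x ≠ lastCoordPoint k m →
        ∃ y : ProjSp k (m + 1), y ≠ q ∧
          ∀ z ∈ lineThrough k (lastCoordPoint k m) x, (coneExtension F h1).Defined z →
            (coneExtension F h1).app z ∈ lineThrough k q y) := by
  refine ⟨⟨coneInverse F G h1, coneExtension_isBirationalOn_univ F G h1 hcrem⟩,
    fun x hx => coneExtension_app_hyperplaneEmbedding F h1 hx, lastCoordPoint k m, fun x hx => ?_⟩
  have hv := init_rep_ne_zero_of_ne_lastCoordPoint hx
  exact ⟨hyperplaneEmbedding k m (F.app (mk k _ hv)), hyperplaneEmbedding_ne_lastCoordPoint _,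
    fun z hz hd =>
      coneExtension_app_mem_lineThrough F h1 hv (Fin.snoc_init_self x.rep).symm hz hd⟩

/-- proof of Proposition `pro:easy`.
Let `ψ : ℙᵐ ⇢ ℙᵐ` (`m = n-1`) be a Cremona transformation given by the tuple
`(f₀, …, f_m)` of homogeneous polynomials of degree `h ≥ 1` in `x₀, …, x_m`.  Then
the linear system `{f₀, …, f_m, x_{m+1}·x₀^{h-1}}` defines a birational map
`Ψ : ℙ^{m+1} ⇢ ℙ^{m+1}` whose restriction to the hyperplane `(x_{m+1} = 0) ≅ ℙᵐ`
is `ψ`, and which sends the lines through the point `p = [0, …, 0, 1]` to lines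
through a fixed point. -/
theorem coneExtension_birational_restricts_and_maps_lines
    (k : Type) [Field k] [IsAlgClosed k] [CharZero k] (m : ℕ)
    (F G : RatMap k m m) (h1 : 1 ≤ F.deg)
    (hcrem : IsBirationalOn k F G (Set.univ : Set (ProjSp k m)) Set.univ) :
    -- `Ψ` is a birational self-map of `ℙ^{m+1}`:
    (∃ G' : RatMap k (m + 1) (m + 1),
        IsBirationalOn k (coneExtension F h1) G'
          (Set.univ : Set (ProjSp k (m + 1))) Set.univ) ∧
    -- the restriction of `Ψ` to the hyperplane `(x_{m+1} = 0)` is `ψ`: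
    (∀ x : ProjSp k m, F.Defined x →
        (coneExtension F h1).Defined (hyperplaneEmbedding k m x) ∧
        (coneExtension F h1).app (hyperplaneEmbedding k m x) =
          hyperplaneEmbedding k m (F.app x)) ∧
    -- `Ψ` sends the lines through `p = [0,…,0,1]` to lines through a fixed point:
    (∃ q : ProjSp k (m + 1), ∀ x : ProjSp k (m + 1), x ≠ lastCoordPoint k m →
        ∃ y : ProjSp k (m + 1), y ≠ q ∧
          ∀ z ∈ lineThrough k (lastCoordPoint k m) x, (coneExtension F h1).Defined z →
            (coneExtension F h1).app z ∈ lineThrough k q y) :=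
  coneExtension_birational_restricts_and_maps_lines_general k m F G h1 hcrem
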